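/- Let G be an invertible (2m+2n)×(2m+2n) complex matrix satisfying G = diag{−U_{2m}J_{2m}, U_{2n}J_{2n}} · G^τ · diag{−J_{2m}U_{2m}, J_{2n}U_{2n}}. Then [0, 𝟏_m^τ, 0, 𝟏_n^τ] · diag{−J_{2m}U_{2m}, J_{2n}U_{2n}} · G^{-1} · col[0_m; 𝟏_m; 0_n; 𝟏_n] = 0. -/

import Mathlib

open Matrix

noncomputable section

/-- The scalar sequence `a_r`: `0` for `r < 0`, `i/2` for `r = 0`, `i` for `r > 0`. -/
def aC (r : ℤ) : ℂ := if r < 0 then 0 else if r = 0 then Complex.I / 2 else Complex.I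

/-- `A_1`: block matrix `{𝒜_{1,p−q}}` with blocks `0`, `(i/2)I_m`, `i·I_m`. -/
def A1 (m n : ℕ) : Matrix (Fin n × Fin m) (Fin n × Fin m) ℂ :=
  Matrix.of fun r c => if r.2 = c.2 then aC (((r.1 : ℕ) : ℤ) - ((c.1 : ℕ) : ℤ)) else 0

/-- `A_2 = diag{𝒜_{2,0}, …, 𝒜_{2,0}}`. -/
def A2 (m n : ℕ) : Matrix (Fin n × Fin m) (Fin n × Fin m) ℂ :=
  Matrix.of fun r c => if r.1 = c.1 then aC (((r.2 : ℕ) : ℤ) - ((c.2 : ℕ) : ℤ)) else 0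

/-- `𝒜_1 = {a_{j−ℓ}}_{j,ℓ=1}^n`. -/
def calA1 (n : ℕ) : Matrix (Fin n) (Fin n) ℂ :=
  Matrix.of fun p q => aC (((p : ℕ) : ℤ) - ((q : ℕ) : ℤ))

/-- `𝒜_2 = {a_{j−ℓ}}_{j,ℓ=1}^m`. -/
def calA2 (m : ℕ) : Matrix (Fin m) (Fin m) ℂ :=
  Matrix.of fun j l => aC (((j : ℕ) : ℤ) - ((l : ℕ) : ℤ))

/-- The Toeplitz-block Toeplitz matrix `T`, entry `t_{p−q}^{(j−ℓ)}`. -/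
def TBT (m n : ℕ) (t : ℤ → ℤ → ℂ) : Matrix (Fin n × Fin m) (Fin n × Fin m) ℂ :=
  Matrix.of fun r c =>
    t (((r.1 : ℕ) : ℤ) - ((c.1 : ℕ) : ℤ)) (((r.2 : ℕ) : ℤ) - ((c.2 : ℕ) : ℤ))

/-- `M_{11}`: block column, `p`-th block `(1/2)𝒯_0 + Σ_{s=1}^{p−1} 𝒯_s`. -/
def M11 (m n : ℕ) (t : ℤ → ℤ → ℂ) : Matrix (Fin n × Fin m) (Fin m) ℂ :=
  Matrix.of fun r l => (1 / 2 : ℂ) * t 0 (((r.2 : ℕ) : ℤ) - ((l : ℕ) : ℤ))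
    + ∑ s ∈ Finset.range (r.1 : ℕ), t ((s : ℤ) + 1) (((r.2 : ℕ) : ℤ) - ((l : ℕ) : ℤ))

/-- `M_{21} = [I_m I_m … I_m]`. -/
def M21 (m n : ℕ) : Matrix (Fin m) (Fin n × Fin m) ℂ :=
  Matrix.of fun j c => if j = c.2 then 1 else 0

/-- `M_{31} = M_{21}^*`. -/
def M31 (m n : ℕ) : Matrix (Fin n × Fin m) (Fin m) ℂ := (M21 m n)ᴴ

/-- `M_{41}`: block row, `q`-th block `(1/2)𝒯_0 + Σ_{s=1}^{q−1} 𝒯_{−s}`. -/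
def M41 (m n : ℕ) (t : ℤ → ℤ → ℂ) : Matrix (Fin m) (Fin n × Fin m) ℂ :=
  Matrix.of fun j c => (1 / 2 : ℂ) * t 0 (((j : ℕ) : ℤ) - ((c.2 : ℕ) : ℤ))
    + ∑ s ∈ Finset.range (c.1 : ℕ), t (-((s : ℤ) + 1)) (((j : ℕ) : ℤ) - ((c.2 : ℕ) : ℤ))

/-- `j`-th entry of the column `ℳ_{12}^{(r)}`. -/
def m12e (m : ℕ) (t : ℤ → ℤ → ℂ) (r : ℤ) (j : Fin m) : ℂ :=
  (1 / 2 : ℂ) * t r 0 + ∑ s ∈ Finset.range (j : ℕ), t r ((s : ℤ) + 1)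

/-- `ℓ`-th entry of the row `ℳ_{42}^{(r)}`. -/
def m42e (m : ℕ) (t : ℤ → ℤ → ℂ) (r : ℤ) (l : Fin m) : ℂ :=
  (1 / 2 : ℂ) * t r 0 + ∑ s ∈ Finset.range (l : ℕ), t r (-((s : ℤ) + 1))

/-- `M_{12} = {ℳ_{12}^{(p−q)}}`. -/
def M12 (m n : ℕ) (t : ℤ → ℤ → ℂ) : Matrix (Fin n × Fin m) (Fin n) ℂ :=
  Matrix.of fun r q => m12e m t (((r.1 : ℕ) : ℤ) - ((q : ℕ) : ℤ)) r.2

/-- `M_{22}`. -/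
def M22 (m n : ℕ) : Matrix (Fin n) (Fin n × Fin m) ℂ :=
  Matrix.of fun p c => if p = c.1 then 1 else 0

/-- `M_{32} = M_{22}^*`. -/
def M32 (m n : ℕ) : Matrix (Fin n × Fin m) (Fin n) ℂ := (M22 m n)ᴴ

/-- `M_{42} = {ℳ_{42}^{(p−q)}}`. -/
def M42 (m n : ℕ) (t : ℤ → ℤ → ℂ) : Matrix (Fin n) (Fin n × Fin m) ℂ :=
  Matrix.of fun p c => m42e m t (((p : ℕ) : ℤ) - ((c.1 : ℕ) : ℤ)) c.2

/-- `K`: the `1×mn` row, `q`-th block `(1/2)ℳ_{42}^{(0)} + Σ_{s=1}^{q−1} ℳ_{42}^{(−s)}`. -/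
def Krow (m n : ℕ) (t : ℤ → ℤ → ℂ) : (Fin n × Fin m) → ℂ :=
  fun c => (1 / 2 : ℂ) * m42e m t 0 c.2
    + ∑ s ∈ Finset.range (c.1 : ℕ), m42e m t (-((s : ℤ) + 1)) c.2

/-- `K_{11}`: `p`-th row `(1/2)ℳ_{42}^{(0)} + Σ_{s=1}^{p−1} ℳ_{42}^{(s)}`. -/
def K11 (m n : ℕ) (t : ℤ → ℤ → ℂ) : Matrix (Fin n) (Fin m) ℂ :=
  Matrix.of fun p l => (1 / 2 : ℂ) * m42e m t 0 l
    + ∑ s ∈ Finset.range (p : ℕ), m42e m t ((s : ℤ) + 1) l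

/-- `K_{12}`: `q`-th column `(1/2)ℳ_{12}^{(0)} + Σ_{s=1}^{q−1} ℳ_{12}^{(−s)}`. -/
def K12 (m n : ℕ) (t : ℤ → ℤ → ℂ) : Matrix (Fin m) (Fin n) ℂ :=
  Matrix.of fun j q => (1 / 2 : ℂ) * m12e m t 0 j
    + ∑ s ∈ Finset.range (q : ℕ), m12e m t (-((s : ℤ) + 1)) j

/-- `Π_1 = [M_{11} M_{31}]`. -/
def Pi1 (m n : ℕ) (t : ℤ → ℤ → ℂ) : Matrix (Fin n × Fin m) (Fin m ⊕ Fin m) ℂ :=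
  fromCols (M11 m n t) (M31 m n)

/-- `Π_2 = [M_{12} M_{32}]`. -/
def Pi2 (m n : ℕ) (t : ℤ → ℤ → ℂ) : Matrix (Fin n × Fin m) (Fin n ⊕ Fin n) ℂ :=
  fromCols (M12 m n t) (M32 m n)

/-- `Π̂_1 = col[M_{21}; M_{41}]`. -/
def PiHat1 (m n : ℕ) (t : ℤ → ℤ → ℂ) : Matrix (Fin m ⊕ Fin m) (Fin n × Fin m) ℂ :=
  fromRows (M21 m n) (M41 m n t)

/-- `Π̂_2 = col[M_{22}; M_{42}]`. -/
def PiHat2 (m n : ℕ) (t : ℤ → ℤ → ℂ) : Matrix (Fin n ⊕ Fin n) (Fin n × Fin m) ℂ :=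
  fromRows (M22 m n) (M42 m n t)

/-- All-ones vector. -/
def onesV (k : Type*) : k → ℂ := fun _ => 1

/-- `g_{12} = i·Π̂_1 T^{-1} Π_2 − i·[[𝟏_m 𝟏_n^*, 0],[K_{12}, 0]]`. -/
def g12M (m n : ℕ) (t : ℤ → ℤ → ℂ) : Matrix (Fin m ⊕ Fin m) (Fin n ⊕ Fin n) ℂ :=
  Complex.I • (PiHat1 m n t * (TBT m n t)⁻¹ * Pi2 m n t)
    - Complex.I • fromBlocks (vecMulVec (onesV (Fin m)) (onesV (Fin n))) 0 (K12 m n t) 0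

/-- `g_{21} = i·Π̂_2 T^{-1} Π_1 − i·[[𝟏_n 𝟏_m^*, 0],[K_{11}, 0]]`. -/
def g21M (m n : ℕ) (t : ℤ → ℤ → ℂ) : Matrix (Fin n ⊕ Fin n) (Fin m ⊕ Fin m) ℂ :=
  Complex.I • (PiHat2 m n t * (TBT m n t)⁻¹ * Pi1 m n t)
    - Complex.I • fromBlocks (vecMulVec (onesV (Fin n)) (onesV (Fin m))) 0 (K11 m n t) 0

/-- The `k×k` flip (anti-diagonal) matrix. -/
def flipU (k : ℕ) : Matrix (Fin k) (Fin k) ℂ :=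
  Matrix.of fun p q => if (p : ℕ) + (q : ℕ) + 1 = k then 1 else 0

/-- `U_{2k}`, the `2k×2k` flip matrix on the sum type. -/
def U2 (k : ℕ) : Matrix (Fin k ⊕ Fin k) (Fin k ⊕ Fin k) ℂ :=
  fromBlocks 0 (flipU k) (flipU k) 0

/-- `J_{2k} = diag{I_k, −I_k}`. -/
def J2 (k : ℕ) : Matrix (Fin k ⊕ Fin k) (Fin k ⊕ Fin k) ℂ :=
  fromBlocks 1 0 0 (-1)

/-- `U = U_{mn}`, the `mn×mn` flip matrix (global index `m·p + j`). -/
def UmnM (m n : ℕ) : Matrix (Fin n × Fin m) (Fin n × Fin m) ℂ :=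
  Matrix.of fun r c =>
    if m * (r.1 : ℕ) + (r.2 : ℕ) + (m * (c.1 : ℕ) + (c.2 : ℕ)) + 1 = m * n then 1 else 0

/-- `ψ(λ) = (λ + i/2)/(λ − i/2)`. -/
def psiM (l : ℂ) : ℂ := (l + Complex.I / 2) / (l - Complex.I / 2)

/-- `h(y_1, y_2)`, entry `y_1^{p−1} y_2^{j−1}`. -/
def hVec (m n : ℕ) (y1 y2 : ℂ) : (Fin n × Fin m) → ℂ :=
  fun r => y1 ^ (r.1 : ℕ) * y2 ^ (r.2 : ℕ)

/-- `ω(λ,μ) = 𝟏^*(A_1^*−μ_1)^{-1}(A_2^*−μ_2)^{-1}T^{-1}(A_2−λ_2)^{-1}(A_1−λ_1)^{-1}𝟏`. -/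
def omegaF (m n : ℕ) (t : ℤ → ℤ → ℂ) (l1 l2 u1 u2 : ℂ) : ℂ :=
  star (onesV (Fin n × Fin m)) ⬝ᵥ
    ((((A1 m n)ᴴ - u1 • 1)⁻¹ * ((A2 m n)ᴴ - u2 • 1)⁻¹ * (TBT m n t)⁻¹ *
      (A2 m n - l2 • 1)⁻¹ * (A1 m n - l1 • 1)⁻¹) *ᵥ onesV (Fin n × Fin m))

/-- `ρ(y,z) = h(conj z_1, conj z_2)^* T^{-1} h(y_1,y_2)`. -/
def rhoF (m n : ℕ) (t : ℤ → ℤ → ℂ) (y1 y2 z1 z2 : ℂ) : ℂ :=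
  star (hVec m n ((starRingEnd ℂ) z1) ((starRingEnd ℂ) z2)) ⬝ᵥ
    ((TBT m n t)⁻¹ *ᵥ hVec m n y1 y2)

/-- `Γ_1 = T^{-1}Π_1`. -/
def Gam1 (m n : ℕ) (t : ℤ → ℤ → ℂ) : Matrix (Fin n × Fin m) (Fin m ⊕ Fin m) ℂ :=
  (TBT m n t)⁻¹ * Pi1 m n t

/-- `Γ_2 = T^{-1}Π_2`. -/
def Gam2 (m n : ℕ) (t : ℤ → ℤ → ℂ) : Matrix (Fin n × Fin m) (Fin n ⊕ Fin n) ℂ :=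
  (TBT m n t)⁻¹ * Pi2 m n t

/-- `Γ̂_1 = Π̂_1 T^{-1}`. -/
def GamHat1 (m n : ℕ) (t : ℤ → ℤ → ℂ) : Matrix (Fin m ⊕ Fin m) (Fin n × Fin m) ℂ :=
  PiHat1 m n t * (TBT m n t)⁻¹

/-- `Γ̂_2 = Π̂_2 T^{-1}`. -/
def GamHat2 (m n : ℕ) (t : ℤ → ℤ → ℂ) : Matrix (Fin n ⊕ Fin n) (Fin n × Fin m) ℂ :=
  PiHat2 m n t * (TBT m n t)⁻¹

/-- `Γ = [Γ_1 Γ_2]`. -/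
def GammaFull (m n : ℕ) (t : ℤ → ℤ → ℂ) :
    Matrix (Fin n × Fin m) ((Fin m ⊕ Fin m) ⊕ (Fin n ⊕ Fin n)) ℂ :=
  fromCols (Gam1 m n t) (Gam2 m n t)

/-- `Γ̂ = col[Γ̂_1; Γ̂_2]`. -/
def GammaHatFull (m n : ℕ) (t : ℤ → ℤ → ℂ) :
    Matrix ((Fin m ⊕ Fin m) ⊕ (Fin n ⊕ Fin n)) (Fin n × Fin m) ℂ :=
  fromRows (GamHat1 m n t) (GamHat2 m n t)

/-- The row vector `u(μ)`. -/
def uRow (m n : ℕ) (t : ℤ → ℤ → ℂ) (u1 u2 : ℂ) :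
    ((Fin m ⊕ Fin m) ⊕ (Fin n ⊕ Fin n)) → ℂ :=
  star (onesV (Fin n × Fin m)) ᵥ*
      (((A1 m n)ᴴ - u1 • 1)⁻¹ * ((A2 m n)ᴴ - u2 • 1)⁻¹ * GammaFull m n t)
    - Complex.I • Sum.elim
        (Sum.elim (star (onesV (Fin m)) ᵥ* ((calA2 m)ᴴ - u2 • 1)⁻¹) (0 : Fin m → ℂ))
        (Sum.elim (star (onesV (Fin n)) ᵥ* ((calA1 n)ᴴ - u1 • 1)⁻¹) (0 : Fin n → ℂ))

/-- The column vector `û(λ)`. -/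
def uHatCol (m n : ℕ) (t : ℤ → ℤ → ℂ) (l1 l2 : ℂ) :
    ((Fin m ⊕ Fin m) ⊕ (Fin n ⊕ Fin n)) → ℂ :=
  (GammaHatFull m n t * (A2 m n - l2 • 1)⁻¹ * (A1 m n - l1 • 1)⁻¹) *ᵥ onesV (Fin n × Fin m)
    + Complex.I • Sum.elim
        (Sum.elim (0 : Fin m → ℂ) ((calA2 m - l2 • 1)⁻¹ *ᵥ onesV (Fin m)))
        (Sum.elim (0 : Fin n → ℂ) ((calA1 n - l1 • 1)⁻¹ *ᵥ onesV (Fin n)))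

/-- `P_1 = diag{I_{2m}, 0}`. -/
def P1M (m n : ℕ) :
    Matrix ((Fin m ⊕ Fin m) ⊕ (Fin n ⊕ Fin n)) ((Fin m ⊕ Fin m) ⊕ (Fin n ⊕ Fin n)) ℂ :=
  fromBlocks 1 0 0 0

/-- `P_2 = I − P_1`. -/
def P2M (m n : ℕ) :
    Matrix ((Fin m ⊕ Fin m) ⊕ (Fin n ⊕ Fin n)) ((Fin m ⊕ Fin m) ⊕ (Fin n ⊕ Fin n)) ℂ :=
  1 - P1M m n

/-- `G(λ)`, built from `g_{12}` and `g_{21}`. -/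
def GMat (m n : ℕ) (g12 : Matrix (Fin m ⊕ Fin m) (Fin n ⊕ Fin n) ℂ)
    (g21 : Matrix (Fin n ⊕ Fin n) (Fin m ⊕ Fin m) ℂ) (l1 l2 : ℂ) :
    Matrix ((Fin m ⊕ Fin m) ⊕ (Fin n ⊕ Fin n)) ((Fin m ⊕ Fin m) ⊕ (Fin n ⊕ Fin n)) ℂ :=
  fromBlocks (fromBlocks (calA2 m - l2 • 1) 0 0 (calA2 m - l2 • 1)) g12
             g21 (fromBlocks (calA1 n - l1 • 1) 0 0 (calA1 n - l1 • 1))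

/-- `G` as a matrix over the polynomial ring `ℂ[λ_1, λ_2]` (variables `X 0 = λ_1`, `X 1 = λ_2`). -/
def GPoly (m n : ℕ) (g12 : Matrix (Fin m ⊕ Fin m) (Fin n ⊕ Fin n) ℂ)
    (g21 : Matrix (Fin n ⊕ Fin n) (Fin m ⊕ Fin m) ℂ) :
    Matrix ((Fin m ⊕ Fin m) ⊕ (Fin n ⊕ Fin n)) ((Fin m ⊕ Fin m) ⊕ (Fin n ⊕ Fin n))
      (MvPolynomial (Fin 2) ℂ) :=
  fromBlocks
    (fromBlocks ((calA2 m).map MvPolynomial.C - (MvPolynomial.X 1 : MvPolynomial (Fin 2) ℂ) • 1) 0 0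
      ((calA2 m).map MvPolynomial.C - (MvPolynomial.X 1 : MvPolynomial (Fin 2) ℂ) • 1))
    (g12.map MvPolynomial.C)
    (g21.map MvPolynomial.C)
    (fromBlocks ((calA1 n).map MvPolynomial.C - (MvPolynomial.X 0 : MvPolynomial (Fin 2) ℂ) • 1) 0 0
      ((calA1 n).map MvPolynomial.C - (MvPolynomial.X 0 : MvPolynomial (Fin 2) ℂ) • 1))

/-- The vector `col[0_m; 𝟏_m; 0_n; 𝟏_n]`. -/
def eVec (m n : ℕ) : ((Fin m ⊕ Fin m) ⊕ (Fin n ⊕ Fin n)) → ℂ :=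
  Sum.elim (Sum.elim (0 : Fin m → ℂ) (onesV (Fin m))) (Sum.elim (0 : Fin n → ℂ) (onesV (Fin n)))

/-- `diag{J_{2m}U_{2m}, J_{2n}U_{2n}}`. -/
def DJU (m n : ℕ) :
    Matrix ((Fin m ⊕ Fin m) ⊕ (Fin n ⊕ Fin n)) ((Fin m ⊕ Fin m) ⊕ (Fin n ⊕ Fin n)) ℂ :=
  fromBlocks (J2 m * U2 m) 0 0 (J2 n * U2 n)

/-- The block column `col[I_m; I_m; …; I_m]`. -/
def EcolId (m n : ℕ) : Matrix (Fin n × Fin m) (Fin m) ℂ :=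
  Matrix.of fun r l => if r.2 = l then 1 else 0

/-!
Write `D = diag{−J_{2m}U_{2m}, J_{2n}U_{2n}}`, so that the hypothesis reads `G = Dᵀ Gᵀ D`.
Since `D` is orthogonal this gives `D G = Gᵀ D`, hence `D G⁻¹ = (G⁻¹)ᵀ D`, and transposing the
scalar `eᵀ D G⁻¹ e` turns it into `eᵀ Dᵀ G⁻¹ e`. But `JU` maps `col[0; 𝟏]` to `col[𝟏; 0]` while
`UJ = (JU)ᵀ` maps it to `col[−𝟏; 0]`, so `Dᵀ e = −D e` and the scalar equals its own negative.
-/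

section TransposeCongruence

variable {ι R : Type*} [Fintype ι] [CommRing R]

theorem Matrix.mul_nonsing_inv_eq_transpose_mul_of_eq [DecidableEq ι] {D G : Matrix ι ι R}
    (hD : D * Dᵀ = 1) (hG : IsUnit G) (h : G = Dᵀ * Gᵀ * D) : D * G⁻¹ = G⁻¹ᵀ * D := by
  have hdet : IsUnit G.det := (isUnit_iff_isUnit_det G).mp hG
  have hDG : D * G = Gᵀ * D := by
    conv_lhs => rw [h]
    rw [← mul_assoc, ← mul_assoc, hD, one_mul]
  calc D * G⁻¹ = (G * G⁻¹)ᵀ * D * G⁻¹ := by rw [mul_nonsing_inv _ hdet, transpose_one, one_mul]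
    _ = G⁻¹ᵀ * Gᵀ * D * G⁻¹ := by rw [transpose_mul]
    _ = G⁻¹ᵀ * D * (G * G⁻¹) := by rw [mul_assoc G⁻¹ᵀ, ← hDG]; simp only [mul_assoc]
    _ = G⁻¹ᵀ * D := by rw [mul_nonsing_inv _ hdet, mul_one]

theorem Matrix.vecMul_mul_dotProduct_self_eq_zero [NoZeroDivisors R] [CharZero R]
    {D K : Matrix ι ι R} {v : ι → R} (hK : D * K = Kᵀ * D) (hv : Dᵀ *ᵥ v = -(D *ᵥ v)) :
    (v ᵥ* (D * K)) ⬝ᵥ v = 0 := by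
  have h_left : (v ᵥ* (D * K)) ⬝ᵥ v = -((D *ᵥ v) ⬝ᵥ (K *ᵥ v)) := by
    rw [← vecMul_vecMul, ← dotProduct_mulVec, ← mulVec_transpose, hv, neg_dotProduct]
  have h_right : (v ᵥ* (D * K)) ⬝ᵥ v = (D *ᵥ v) ⬝ᵥ (K *ᵥ v) := by
    rw [hK, ← vecMul_vecMul, vecMul_transpose, ← dotProduct_mulVec, dotProduct_comm]
  rw [h_right, ← CharZero.eq_neg_self_iff, ← h_left, h_right]

end TransposeCongruence

theorem flipU_apply_eq_ite_rev (k : ℕ) (p q : Fin k) :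
    flipU k p q = if q = p.rev then 1 else 0 := by
  simp only [flipU, of_apply, Fin.ext_iff, Fin.val_rev]
  exact if_congr (by omega) rfl rfl

theorem flipU_transpose (k : ℕ) : (flipU k)ᵀ = flipU k := by
  ext p q
  simp only [transpose_apply, flipU, of_apply]
  exact if_congr (by omega) rfl rfl

theorem flipU_mul_flipU (k : ℕ) : flipU k * flipU k = 1 := by
  ext p q
  rw [mul_apply, Finset.sum_eq_single p.rev]
  · simp [flipU_apply_eq_ite_rev, one_apply, eq_comm]
  · intro j _ hj
    rw [flipU_apply_eq_ite_rev, if_neg hj, zero_mul]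
  · simp

theorem flipU_mulVec_onesV (k : ℕ) : flipU k *ᵥ onesV (Fin k) = onesV (Fin k) := by
  funext p
  simp [mulVec, dotProduct, flipU_apply_eq_ite_rev, onesV]

theorem J2_mul_U2 (k : ℕ) : J2 k * U2 k = fromBlocks 0 (flipU k) (-flipU k) 0 := by
  simp [J2, U2, fromBlocks_multiply]

theorem U2_mul_J2 (k : ℕ) : U2 k * J2 k = fromBlocks 0 (-flipU k) (flipU k) 0 := by
  simp [J2, U2, fromBlocks_multiply]

theorem J2_mul_U2_transpose (k : ℕ) : (J2 k * U2 k)ᵀ = U2 k * J2 k := by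
  simp [J2_mul_U2, U2_mul_J2, fromBlocks_transpose, flipU_transpose]

theorem J2_mul_U2_mul_U2_mul_J2 (k : ℕ) : (J2 k * U2 k) * (U2 k * J2 k) = 1 := by
  simp [J2_mul_U2, U2_mul_J2, fromBlocks_multiply, flipU_mul_flipU, ← fromBlocks_one]

theorem J2_mul_U2_mulVec (k : ℕ) :
    (J2 k * U2 k) *ᵥ Sum.elim 0 (onesV (Fin k)) = Sum.elim (onesV (Fin k)) 0 := by
  simp [J2_mul_U2, fromBlocks_mulVec, flipU_mulVec_onesV]

theorem U2_mul_J2_mulVec (k : ℕ) :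
    (U2 k * J2 k) *ᵥ Sum.elim 0 (onesV (Fin k)) = -Sum.elim (onesV (Fin k)) 0 := by
  ext (i | i) <;> simp [U2_mul_J2, fromBlocks_mulVec, neg_mulVec, flipU_mulVec_onesV]

def skewDiag (m n : ℕ) :
    Matrix ((Fin m ⊕ Fin m) ⊕ (Fin n ⊕ Fin n)) ((Fin m ⊕ Fin m) ⊕ (Fin n ⊕ Fin n)) ℂ :=
  fromBlocks (-(J2 m * U2 m)) 0 0 (J2 n * U2 n)

theorem skewDiag_transpose (m n : ℕ) :
    (skewDiag m n)ᵀ = fromBlocks (-(U2 m * J2 m)) 0 0 (U2 n * J2 n) := by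
  rw [skewDiag, fromBlocks_transpose, transpose_neg, J2_mul_U2_transpose, J2_mul_U2_transpose]
  simp

theorem skewDiag_mul_transpose (m n : ℕ) : skewDiag m n * (skewDiag m n)ᵀ = 1 := by
  rw [skewDiag_transpose, skewDiag]
  simp [fromBlocks_multiply, J2_mul_U2_mul_U2_mul_J2, ← fromBlocks_one]

theorem skewDiag_transpose_mulVec_eVec (m n : ℕ) :
    (skewDiag m n)ᵀ *ᵥ eVec m n = -(skewDiag m n *ᵥ eVec m n) := by
  rw [skewDiag_transpose, skewDiag]
  ext ((i | i) | (i | i)) <;>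
    simp [eVec, fromBlocks_mulVec, neg_mulVec, J2_mul_U2_mulVec, U2_mul_J2_mulVec]

theorem skew_vanishing_general (m n : ℕ)
    (G : Matrix ((Fin m ⊕ Fin m) ⊕ (Fin n ⊕ Fin n)) ((Fin m ⊕ Fin m) ⊕ (Fin n ⊕ Fin n)) ℂ)
    (hG : IsUnit G)
    (hsym : G = fromBlocks (-(U2 m * J2 m)) 0 0 (U2 n * J2 n) * Gᵀ *
        fromBlocks (-(J2 m * U2 m)) 0 0 (J2 n * U2 n)) :
    (eVec m n ᵥ* (fromBlocks (-(J2 m * U2 m)) 0 0 (J2 n * U2 n) * G⁻¹)) ⬝ᵥ eVec m n = 0 := by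
  rw [← skewDiag_transpose] at hsym
  exact vecMul_mul_dotProduct_self_eq_zero
    (mul_nonsing_inv_eq_transpose_mul_of_eq (skewDiag_mul_transpose m n) hG hsym)
    (skewDiag_transpose_mulVec_eVec m n)

/-- the vanishing relation (formula (3.12)) for invertible `G` with the
skew-symmetry property. -/
theorem skew_vanishing (m n : ℕ) (hm : 0 < m) (hn : 0 < n)
    (G : Matrix ((Fin m ⊕ Fin m) ⊕ (Fin n ⊕ Fin n)) ((Fin m ⊕ Fin m) ⊕ (Fin n ⊕ Fin n)) ℂ)
    (hG : IsUnit G)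
    (hsym : G = fromBlocks (-(U2 m * J2 m)) 0 0 (U2 n * J2 n) * Gᵀ *
        fromBlocks (-(J2 m * U2 m)) 0 0 (J2 n * U2 n)) :
    (eVec m n ᵥ* (fromBlocks (-(J2 m * U2 m)) 0 0 (J2 n * U2 n) * G⁻¹)) ⬝ᵥ eVec m n = 0 :=
  skew_vanishing_general m n G hG hsym

end
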